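/- Let k > r ≥ 2 be integers and let m be a positive integer such that every r-partite r-graph satisfying the (r,k)-cover property has cover number at most m. Let G be a finite simple graph in which for every set S of at most k vertices there is a vertex v such that every vertex of S is adjacent to v or equal to v. Then for every edge-colouring of G with colours 1,…,r, the vertex set of G can be covered by at most m monochromatic components. Moreover, if every r-partite r-graph satisfying the (r,k)-cover property has a transversal cover, then V(G) can be covered by monochromatic components of pairwise distinct colours (at most one component of each colour). -/

import Mathlib

/-- A set of vertices `T` covers a hypergraph with edge family `E` if it meets every edge. -/
def IsCover {V : Type*} (E : Set (Set V)) (T : Set V) : Prop :=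
  ∀ e ∈ E, (e ∩ T).Nonempty

/-- The cover number of a hypergraph: minimum size of a cover. -/
noncomputable def coverNumber {V : Type*} (E : Set (Set V)) : ℕ :=
  sInf {n | ∃ T : Set V, T.ncard = n ∧ IsCover E T}

/-- The `(k,ℓ)`-cover property: any at most `k` edges have a cover of size at most `ℓ`. -/
def CoverProperty {V : Type*} (E : Set (Set V)) (k ℓ : ℕ) : Prop :=
  ∀ S ⊆ E, S.ncard ≤ k → ∃ T : Set V, T.ncard ≤ ℓ ∧ IsCover S T

/-- `E` is an `r`-partite `r`-graph w.r.t. the partition `part`. -/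
def IsPartite {V : Type*} (r : ℕ) (part : V → Fin r) (E : Set (Set V)) : Prop :=
  ∀ e ∈ E, ∀ i : Fin r, (e ∩ part ⁻¹' {i}).ncard = 1

/-- A transversal cover: a cover containing exactly one vertex from each part. -/
def IsTransversalCover {V : Type*} (r : ℕ) (part : V → Fin r) (E : Set (Set V))
    (T : Set V) : Prop :=
  IsCover E T ∧ ∀ i : Fin r, (T ∩ part ⁻¹' {i}).ncard = 1

/-- The `(r,k)`-cover property: any at most `k` edges have a transversal cover. -/
def PartiteCoverProperty {V : Type*} (r : ℕ) (part : V → Fin r) (E : Set (Set V))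
    (k : ℕ) : Prop :=
  ∀ S ⊆ E, S.ncard ≤ k → ∃ T : Set V, IsTransversalCover r part S T

/-- The spanning subgraph of `G` consisting of the edges of colour `i`. -/
def colorSubgraph {V : Type*} (G : SimpleGraph V) {r : ℕ} (c : Sym2 V → Fin r)
    (i : Fin r) : SimpleGraph V where
  Adj u v := G.Adj u v ∧ c s(u, v) = i
  symm := ⟨fun u v h => ⟨h.1.symm, by rw [Sym2.eq_swap]; exact h.2⟩⟩
  loopless := ⟨fun v h => G.irrefl h.1⟩

/-!
Fix a colouring `c`. Form the `r`-partite `r`-graph whose `i`-th part consists of the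
monochromatic components of colour `i`, with one edge per vertex `v` of `G` made of the `r`
components containing `v`. Edges of adjacent or equal vertices meet (in the colour of the edge
joining them), so a common closed neighbour `w` of at most `k` vertices yields, as the edge of `w`,
a transversal cover of their edges: the hypergraph has the `(r,k)`-cover property. A cover of it is
a set of monochromatic components containing every vertex, and a transversal cover has exactly
one component of each colour.
-/

section Transversal

variable {W : Type*} {r : ℕ} {part : W → Fin r}

lemma Set.range_inter_preimage_singleton_eq {f : Fin r → W} (hf : ∀ i, part (f i) = i)
    (i : Fin r) : Set.range f ∩ part ⁻¹' {i} = {f i} := by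
  ext x
  constructor
  · rintro ⟨⟨j, rfl⟩, hj⟩
    rw [Set.mem_preimage, Set.mem_singleton_iff, hf] at hj
    rw [hj, Set.mem_singleton_iff]
  · rintro rfl
    exact ⟨⟨i, rfl⟩, hf i⟩

lemma Set.ncard_range_inter_preimage_singleton {f : Fin r → W} (hf : ∀ i, part (f i) = i)
    (i : Fin r) : (Set.range f ∩ part ⁻¹' {i}).ncard = 1 := by
  rw [Set.range_inter_preimage_singleton_eq hf, Set.ncard_singleton]

lemma IsTransversalCover.exists_eq_range {E : Set (Set W)} {T : Set W}
    (hT : IsTransversalCover r part E T) :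
    ∃ f : Fin r → W, (∀ i, part (f i) = i) ∧ T = Set.range f := by
  choose f hf using fun i => Set.ncard_eq_one.mp (hT.2 i)
  have hf_mem (i : Fin r) : f i ∈ T ∩ part ⁻¹' {i} := by
    rw [hf i]; exact Set.mem_singleton _
  refine ⟨f, fun i => (hf_mem i).2, Set.Subset.antisymm (fun x hx => ?_) ?_⟩
  · have hx' : x ∈ T ∩ part ⁻¹' {part x} := ⟨hx, rfl⟩
    rw [hf, Set.mem_singleton_iff] at hx'
    exact ⟨part x, hx'.symm⟩
  · rintro _ ⟨i, rfl⟩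
    exact (hf_mem i).1

end Transversal

lemma IsCover.exists_ncard_eq_coverNumber {V : Type*} {E : Set (Set V)} {T : Set V}
    (hT : IsCover E T) : ∃ T' : Set V, T'.ncard = coverNumber E ∧ IsCover E T' :=
  Nat.sInf_mem (s := {n | ∃ T : Set V, T.ncard = n ∧ IsCover E T}) ⟨_, T, rfl, hT⟩

section ComponentHypergraph

variable {V : Type*} {r : ℕ} (G : SimpleGraph V) (c : Sym2 V → Fin r)

/-- The pair `(i, componentRep G c i v)` encodes the component of colour `i` containing `v`. -/
noncomputable def componentRep (i : Fin r) (v : V) : V :=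
  ((colorSubgraph G c i).connectedComponentMk v).out

def componentEdge (v : V) : Set (Fin r × V) :=
  Set.range fun i => (i, componentRep G c i v)

def componentHypergraph : Set (Set (Fin r × V)) :=
  Set.range (componentEdge G c)

variable {G c}

lemma componentRep_reachable (i : Fin r) (v : V) :
    (colorSubgraph G c i).Reachable (componentRep G c i v) v :=
  SimpleGraph.ConnectedComponent.exact (Quot.out_eq _)

lemma componentRep_eq_of_reachable {i : Fin r} {u v : V}
    (h : (colorSubgraph G c i).Reachable u v) : componentRep G c i u = componentRep G c i v := by
  rw [componentRep, componentRep, SimpleGraph.ConnectedComponent.sound h]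

lemma isPartite_componentHypergraph : IsPartite r Prod.fst (componentHypergraph G c) := by
  rintro _ ⟨v, rfl⟩
  exact Set.ncard_range_inter_preimage_singleton fun _ => rfl

lemma componentEdge_nonempty (hr : 0 < r) (v : V) : (componentEdge G c v).Nonempty :=
  ⟨_, ⟨⟨0, hr⟩, rfl⟩⟩

lemma componentEdge_inter_nonempty (hr : 0 < r) {u w : V} (h : G.Adj u w ∨ u = w) :
    (componentEdge G c u ∩ componentEdge G c w).Nonempty := by
  rcases h with h | rfl
  · have hreach : (colorSubgraph G c (c s(u, w))).Reachable u w := ⟨.cons ⟨h, rfl⟩ .nil⟩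
    exact ⟨(c s(u, w), componentRep G c _ u), ⟨_, rfl⟩,
      ⟨c s(u, w), by rw [componentRep_eq_of_reachable hreach]⟩⟩
  · rw [Set.inter_self]
    exact componentEdge_nonempty hr u

lemma isCover_univ_componentHypergraph (hr : 0 < r) :
    IsCover (componentHypergraph G c) Set.univ := by
  rintro _ ⟨v, rfl⟩
  rw [Set.inter_univ]
  exact componentEdge_nonempty hr v

lemma partiteCoverProperty_componentHypergraph [Finite V] (hr : 0 < r) {k : ℕ}
    (hG : ∀ S : Finset V, S.card ≤ k → ∃ v : V, ∀ u ∈ S, G.Adj u v ∨ u = v) :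
    PartiteCoverProperty r Prod.fst (componentHypergraph G c) k := by
  intro S hSE hSk
  obtain ⟨U, rfl, hinj⟩ := Set.exists_image_eq_injOn_of_subset_range hSE
  have hUk : (Set.toFinite U).toFinset.card ≤ k := by
    rwa [← Set.ncard_eq_toFinset_card, ← hinj.ncard_image]
  obtain ⟨w, hw⟩ := hG _ hUk
  refine ⟨componentEdge G c w, ?_, Set.ncard_range_inter_preimage_singleton fun _ => rfl⟩
  rintro _ ⟨u, hu, rfl⟩
  exact componentEdge_inter_nonempty hr (hw u ((Set.toFinite U).mem_toFinset.mpr hu))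

lemma exists_mem_of_isCover_componentHypergraph {T : Set (Fin r × V)}
    (hT : IsCover (componentHypergraph G c) T) (v : V) :
    ∃ i, (i, componentRep G c i v) ∈ T := by
  obtain ⟨_, ⟨i, rfl⟩, hi⟩ := hT _ ⟨v, rfl⟩
  exact ⟨i, hi⟩

end ComponentHypergraph

theorem stmt3_general {VG : Type} [Fintype VG] (r k m : ℕ)
    (hr : 2 ≤ r)
    (hhyp : ∀ (W : Type) [Fintype W] (part : W → Fin r) (E : Set (Set W)),
      IsPartite r part E → PartiteCoverProperty r part E k → coverNumber E ≤ m)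
    (G : SimpleGraph VG)
    (hG : ∀ S : Finset VG, S.card ≤ k → ∃ v : VG, ∀ u ∈ S, G.Adj u v ∨ u = v) :
    (∀ c : Sym2 VG → Fin r,
      ∃ S : Finset (Fin r × VG), S.card ≤ m ∧
        ∀ v : VG, ∃ p ∈ S, (colorSubgraph G c p.1).Reachable p.2 v) ∧
    ((∀ (W : Type) [Fintype W] (part : W → Fin r) (E : Set (Set W)),
        IsPartite r part E → PartiteCoverProperty r part E k →
          ∃ T : Set W, IsTransversalCover r part E T) →
      ∀ c : Sym2 VG → Fin r, ∃ f : Fin r → VG,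
        ∀ v : VG, ∃ i : Fin r, (colorSubgraph G c i).Reachable (f i) v) := by
  have hr0 : 0 < r := by omega
  have hpart (c : Sym2 VG → Fin r) := isPartite_componentHypergraph (G := G) (c := c)
  have hprop (c : Sym2 VG → Fin r) := partiteCoverProperty_componentHypergraph (c := c) hr0 hG
  refine ⟨fun c => ?_, fun htrans c => ?_⟩
  · obtain ⟨T, hTcard, hT⟩ :=
      (isCover_univ_componentHypergraph (G := G) (c := c) hr0).exists_ncard_eq_coverNumber
    refine ⟨T.toFinite.toFinset, ?_, fun v => ?_⟩
    · rw [← Set.ncard_eq_toFinset_card, hTcard]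
      exact hhyp _ _ _ (hpart c) (hprop c)
    · obtain ⟨i, hi⟩ := exists_mem_of_isCover_componentHypergraph hT v
      exact ⟨_, T.toFinite.mem_toFinset.mpr hi, componentRep_reachable i v⟩
  · obtain ⟨T, hT⟩ := htrans _ _ _ (hpart c) (hprop c)
    obtain ⟨f, hf, rfl⟩ := hT.exists_eq_range
    refine ⟨fun i => (f i).2, fun v => ?_⟩
    obtain ⟨i, j, hj⟩ := exists_mem_of_isCover_componentHypergraph hT.1 v
    obtain rfl : j = i := (hf j).symm.trans (congrArg Prod.fst hj)
    refine ⟨j, show (colorSubgraph G c j).Reachable (f j).2 v from ?_⟩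
    rw [hj]
    exact componentRep_reachable j v

/-- if every `r`-partite `r`-graph with the `(r,k)`-cover property has
cover number at most `m`, and in `G` every set of at most `k` vertices has a common
closed neighbour, then every `r`-colouring of `G` admits a cover by at most `m`
monochromatic components; moreover, if every such hypergraph has a transversal cover,
then `V(G)` can be covered by monochromatic components of pairwise distinct colours. -/
theorem stmt3 {VG : Type} [Fintype VG] [Nonempty VG] (r k m : ℕ)
    (hr : 2 ≤ r) (hk : r < k) (hm : 1 ≤ m)
    (hhyp : ∀ (W : Type) [Fintype W] (part : W → Fin r) (E : Set (Set W)),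
      IsPartite r part E → PartiteCoverProperty r part E k → coverNumber E ≤ m)
    (G : SimpleGraph VG)
    (hG : ∀ S : Finset VG, S.card ≤ k → ∃ v : VG, ∀ u ∈ S, G.Adj u v ∨ u = v) :
    (∀ c : Sym2 VG → Fin r,
      ∃ S : Finset (Fin r × VG), S.card ≤ m ∧
        ∀ v : VG, ∃ p ∈ S, (colorSubgraph G c p.1).Reachable p.2 v) ∧
    ((∀ (W : Type) [Fintype W] (part : W → Fin r) (E : Set (Set W)),
        IsPartite r part E → PartiteCoverProperty r part E k →
          ∃ T : Set W, IsTransversalCover r part E T) →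
      ∀ c : Sym2 VG → Fin r, ∃ f : Fin r → VG,
        ∀ v : VG, ∃ i : Fin r, (colorSubgraph G c i).Reachable (f i) v) :=
  stmt3_general r k m hr hhyp G hG
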